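/- arXiv:1905.09151 — 3 statements merged into one kernel-verified Lean document; each statement's English description precedes it below -/
import Mathlib

section
/- Let R be a regular category with terminal object pt, and let r : Obj(R) → ℤ be a lower-bounded function such that (1) r(A) ≤ r(B) for every monomorphism A ↪ B, (2) r(A) ≥ r(pt) for every regular epimorphism A ↠ pt, and (3) r is fiber-wise. Then r is a rank function on R. -/
open CategoryTheory CategoryTheory.Limits

universe u v

/-- Let `R` be a regular category with terminal object `pt` and
`r : Obj R → ℤ` a lower-bounded function that is (1) monotone under monomorphisms,
(2) satisfies `r A ≥ r pt` for every regular epimorphism `A ↠ pt`, and (3) is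
fiber-wise, i.e. for every regular epimorphism `φ : B ↠ D`,
`r B − r D = Σ_{ι : pt ⟶ D} (r (B ×_D^ι pt) − r pt)`.
Then `r` is a rank function on `R`. -/
theorem statement2 {R : Type u} [Category.{v} R] [HasTerminal R] [HasPullbacks R]
    [∀ D : R, Fintype ((⊤_ R) ⟶ D)]
    (hstab : ∀ {P X Y Z : R} (fst : P ⟶ X) (snd : P ⟶ Y) (f : X ⟶ Z) (g : Y ⟶ Z),
      IsPullback fst snd f g → Nonempty (RegularEpi f) → Nonempty (RegularEpi snd))
    (r : R → ℤ)
    (hlb : ∃ m : ℤ, ∀ X : R, m ≤ r X)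
    (hmono : ∀ {A B : R} (f : A ⟶ B), Mono f → r A ≤ r B)
    (hpt : ∀ {A : R} (f : A ⟶ ⊤_ R), Nonempty (RegularEpi f) → r (⊤_ R) ≤ r A)
    (hfw : ∀ {B D : R} (φ : B ⟶ D), Nonempty (RegularEpi φ) →
      r B - r D = ∑ ι : (⊤_ R) ⟶ D, (r (pullback φ ι) - r (⊤_ R))) :
    (∀ {A B : R} (f : A ⟶ B), Mono f → r A ≤ r B) ∧
    (∀ {B D : R} (f : B ⟶ D), Nonempty (RegularEpi f) → r D ≤ r B) ∧
    (∀ {A B C D : R} (ι₁ : A ⟶ B) (π₁ : A ⟶ C) (π₂ : B ⟶ D) (ι₂ : C ⟶ D),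
      IsPullback ι₁ π₁ π₂ ι₂ → Mono ι₁ → Mono ι₂ →
      Nonempty (RegularEpi π₁) → Nonempty (RegularEpi π₂) →
      r D - r C ≤ r B - r A) := by
  have hiso : ∀ {X Y : R} (e : X ≅ Y), r X = r Y := fun e =>
    le_antisymm (hmono e.hom inferInstance) (hmono e.inv inferInstance)
  have hfib : ∀ {B D : R} (φ : B ⟶ D), Nonempty (RegularEpi φ) → ∀ (ι : (⊤_ R) ⟶ D),
      r (⊤_ R) ≤ r (pullback φ ι) := by
    intro B D φ hφ ι
    exact hpt (pullback.snd φ ι) (hstab _ _ _ _ (IsPullback.of_hasPullback φ ι) hφ)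
  refine ⟨hmono, ?_, ?_⟩
  · intro B D f hf
    have h := hfw f hf
    have h0 : 0 ≤ ∑ ι : (⊤_ R) ⟶ D, (r (pullback f ι) - r (⊤_ R)) :=
      Finset.sum_nonneg fun ι _ => by linarith [hfib f hf ι]
    linarith
  · intro A B C D ι₁ π₁ π₂ ι₂ hsq hι₁ hι₂ hπ₁ hπ₂
    haveI := hι₂
    haveI : DecidableEq ((⊤_ R) ⟶ D) := Classical.decEq _
    have h1 := hfw π₁ hπ₁
    have h2 := hfw π₂ hπ₂
    have key : ∀ κ : (⊤_ R) ⟶ C, r (pullback π₁ κ) = r (pullback π₂ (κ ≫ ι₂)) := by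
      intro κ
      exact hiso ((IsPullback.of_hasPullback π₁ κ).paste_horiz hsq).isoPullback
    have hinj : ∀ a ∈ Finset.univ, ∀ b ∈ Finset.univ,
        (fun κ : (⊤_ R) ⟶ C => κ ≫ ι₂) a = (fun κ : (⊤_ R) ⟶ C => κ ≫ ι₂) b → a = b := by
      intro a _ b _ hab
      rwa [cancel_mono ι₂] at hab
    have hsum : ∑ κ : (⊤_ R) ⟶ C, (r (pullback π₁ κ) - r (⊤_ R))
        ≤ ∑ ι : (⊤_ R) ⟶ D, (r (pullback π₂ ι) - r (⊤_ R)) := by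
      calc ∑ κ : (⊤_ R) ⟶ C, (r (pullback π₁ κ) - r (⊤_ R))
          = ∑ κ : (⊤_ R) ⟶ C, (r (pullback π₂ (κ ≫ ι₂)) - r (⊤_ R)) := by
            simp only [key]
        _ = ∑ ι ∈ Finset.univ.image (fun κ : (⊤_ R) ⟶ C => κ ≫ ι₂),
              (r (pullback π₂ ι) - r (⊤_ R)) :=
            (Finset.sum_image (f := fun ι => r (pullback π₂ ι) - r (⊤_ R)) hinj).symm
        _ ≤ ∑ ι : (⊤_ R) ⟶ D, (r (pullback π₂ ι) - r (⊤_ R)) :=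
            Finset.sum_le_sum_of_subset_of_nonneg (Finset.subset_univ _)
              (fun ι _ _ => by linarith [hfib π₂ hπ₂ ι])
    linarith
end

section
/- Let (R, r) be a ranked category. The function sending a morphism φ to r(im(φ)) is a categorical persistence function on R: for every chain u₁ → u₂ → v₁ → v₂, r(im(u₁→v₁)) ≤ r(im(u₂→v₁)), r(im(u₂→v₂)) ≤ r(im(u₂→v₁)), and r(im(u₂→v₁)) − r(im(u₁→v₁)) ≥ r(im(u₂→v₂)) − r(im(u₁→v₂)). -/
open CategoryTheory CategoryTheory.Limits

universe u v

section Aux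

variable {C : Type u} [Category.{v} C]

/-- A regular epi composed with an iso is a regular epi. -/
noncomputable def regularEpiCompIsoAux {X Y Z : C} (π : X ⟶ Y) (i : Y ⟶ Z) (h : RegularEpi π)
    [IsIso i] : RegularEpi (π ≫ i) where
  W := h.W
  left := h.left
  right := h.right
  w := by rw [← Category.assoc, ← Category.assoc, h.w]
  isColimit := IsColimit.ofIsoColimit h.isColimit (Cofork.ext (asIso i) rfl)

/-- Auxiliary: in a category with images whose `factorThruImage` maps are regular epis,
for `f : X ⟶ Y`, `g : Y ⟶ Z` there is a regular epimorphism
`image f ⟶ image (f ≫ g)` compatible with the image inclusions. -/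
theorem exists_regularEpi_image_comp [HasImages C]
    (hreg : ∀ {X Y : C} (f : X ⟶ Y), Nonempty (RegularEpi (factorThruImage f)))
    {X Y Z : C} (f : X ⟶ Y) (g : Y ⟶ Z) :
    ∃ π : image f ⟶ image (f ≫ g), Nonempty (RegularEpi π) ∧
      π ≫ image.ι (f ≫ g) = image.ι f ≫ g := by
  set h : image f ⟶ Z := image.ι f ≫ g with hh
  -- A mono factorisation of `f ≫ g` through `image h`.
  have hfac : (factorThruImage f ≫ factorThruImage h) ≫ image.ι h = f ≫ g := by
    rw [Category.assoc, image.fac, hh, ← Category.assoc, image.fac]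
  let F : MonoFactorisation (f ≫ g) :=
    { I := image h
      m := image.ι h
      e := factorThruImage f ≫ factorThruImage h
      fac := hfac }
  -- This factorisation is an image factorisation.
  haveI : IsRegularEpi (factorThruImage f) := ⟨hreg f⟩
  have isim : IsImage F := by
    refine ⟨fun F' => ?_, fun F' => ?_⟩
    · -- lift `image h ⟶ F'.I`
      -- first lift through the strong epi `factorThruImage f`
      have hcomm : factorThruImage f ≫ h = F'.e ≫ F'.m := by
        rw [hh, ← Category.assoc, image.fac, F'.fac]
      haveI : Mono F'.m := F'.m_mono
      have sq : CommSq F'.e (factorThruImage f) F'.m h := ⟨hcomm.symm⟩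
      exact image.lift { I := F'.I, m := F'.m, e := sq.lift, fac := sq.fac_right }
    · exact image.lift_fac _
  -- the comparison iso between `image (f ≫ g)` and `image h`
  let e : image (f ≫ g) ≅ image h := IsImage.isoExt (Image.isImage (f ≫ g)) isim
  have he : e.hom ≫ image.ι h = image.ι (f ≫ g) := IsImage.isoExt_hom_m _ _
  have he' : e.inv ≫ image.ι (f ≫ g) = image.ι h := by
    rw [← he, Iso.inv_hom_id_assoc]
  refine ⟨factorThruImage h ≫ e.inv, ?_, ?_⟩
  · haveI : RegularEpi (factorThruImage h) := (hreg h).some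
    exact ⟨regularEpiCompIsoAux _ _ this⟩
  · rw [Category.assoc, he', image.fac, hh]

end Aux

/-- Let `(R, r)` be a ranked category (a regular category, encoded by
image factorizations with regular epi first factor, with a rank function satisfying
the commutative-square inequality).  Then `φ ↦ r (im φ)` is a categorical persistence
function: for every chain `u₁ → u₂ → v₁ → v₂`,
`r (im (u₁→v₁)) ≤ r (im (u₂→v₁))`, `r (im (u₂→v₂)) ≤ r (im (u₂→v₁))` and
`r (im (u₂→v₁)) − r (im (u₁→v₁)) ≥ r (im (u₂→v₂)) − r (im (u₁→v₂))`. -/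
theorem statement8 {R : Type u} [Category.{v} R] [HasImages R]
    (hreg : ∀ {X Y : R} (f : X ⟶ Y), Nonempty (RegularEpi (factorThruImage f)))
    (r : R → ℤ)
    (hlb : ∃ m : ℤ, ∀ X : R, m ≤ r X)
    (hmono : ∀ {A B : R} (f : A ⟶ B), Mono f → r A ≤ r B)
    (hrepi : ∀ {B D : R} (f : B ⟶ D), Nonempty (RegularEpi f) → r D ≤ r B)
    (hsq : ∀ {A B C D : R} (ι₁ : A ⟶ B) (π₁ : A ⟶ C) (π₂ : B ⟶ D) (ι₂ : C ⟶ D),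
      ι₁ ≫ π₂ = π₁ ≫ ι₂ → Mono ι₁ → Mono ι₂ →
      Nonempty (RegularEpi π₁) → Nonempty (RegularEpi π₂) →
      r D - r C ≤ r B - r A)
    {u₁ u₂ v₁ v₂ : R} (a : u₁ ⟶ u₂) (b : u₂ ⟶ v₁) (c : v₁ ⟶ v₂) :
    r (image (a ≫ b)) ≤ r (image b) ∧
    r (image (b ≫ c)) ≤ r (image b) ∧
    r (image (b ≫ c)) - r (image (a ≫ b ≫ c)) ≤ r (image b) - r (image (a ≫ b)) := by
  -- the horizontal monos
  let ι₁ : image (a ≫ b) ⟶ image b := image.preComp a b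
  let ι₂ : image (a ≫ b ≫ c) ⟶ image (b ≫ c) := image.preComp a (b ≫ c)
  -- the vertical regular epis
  obtain ⟨π₂, hπ₂, hπ₂ι⟩ := exists_regularEpi_image_comp hreg b c
  obtain ⟨π₁', hπ₁', hπ₁'ι⟩ := exists_regularEpi_image_comp hreg (a ≫ b) c
  let eqh : image ((a ≫ b) ≫ c) ⟶ image (a ≫ b ≫ c) := image.eqToHom (Category.assoc a b c)
  have heqh : eqh ≫ image.ι (a ≫ b ≫ c) = image.ι ((a ≫ b) ≫ c) := image.lift_fac _
  let π₁ : image (a ≫ b) ⟶ image (a ≫ b ≫ c) := π₁' ≫ eqh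
  have hπ₁ : Nonempty (RegularEpi π₁) := by
    haveI := hπ₁'.some
    haveI : IsIso eqh := by infer_instance
    exact ⟨regularEpiCompIsoAux _ _ hπ₁'.some⟩
  have hπ₁ι : π₁ ≫ image.ι (a ≫ b ≫ c) = image.ι (a ≫ b) ≫ c := by
    rw [Category.assoc, heqh, hπ₁'ι]
  -- commutativity of the square
  have hcomm : ι₁ ≫ π₂ = π₁ ≫ ι₂ := by
    have hm : Mono (image.ι (b ≫ c)) := inferInstance
    rw [← cancel_mono (image.ι (b ≫ c))]
    rw [Category.assoc, Category.assoc, hπ₂ι, image.preComp_ι, hπ₁ι]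
    show image.preComp a b ≫ image.ι b ≫ c = image.ι (a ≫ b) ≫ c
    rw [← Category.assoc, image.preComp_ι]
  refine ⟨?_, ?_, ?_⟩
  · exact hmono ι₁ (image.preComp_mono a b)
  · exact hrepi π₂ hπ₂
  · exact hsq ι₁ π₁ π₂ ι₂ hcomm (image.preComp_mono a b) (image.preComp_mono a (b ≫ c)) hπ₁ hπ₂
end

section
/- Let C : R → Π_{γ∈Γ} Q_γ be a Γ-coloring of a ranked category (R, r). Two ℝ-indexed diagrams F, G in R are ε-interleaved in R if and only if C_γ F and C_γ G are ε-interleaved in Q_γ for every γ ∈ Γ. Consequently, the interleaving distance in R equals the supremum over γ of the interleaving distances of the colored components: d_R(F, G) = sup_γ d_{Q_γ}(C_γ F, C_γ G). -/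
open CategoryTheory CategoryTheory.Limits
open scoped ENNReal

universe w u v u₂ v₂

/-- `F` and `G` are `ε`-interleaved (componentwise description of the natural
transformations `φ : F → G T_ε` and `ψ : G → F T_ε` with
`(ψ T_ε) φ = F η_{2ε}` and `(φ T_ε) ψ = G η_{2ε}`). -/
def Interleaved {C : Type u} [Category.{v} C] (ε : ℝ) (hε : 0 ≤ ε) (F G : ℝ ⥤ C) : Prop :=
  ∃ (φ : ∀ a : ℝ, F.obj a ⟶ G.obj (a + ε)) (ψ : ∀ a : ℝ, G.obj a ⟶ F.obj (a + ε)),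
    (∀ (a b : ℝ) (h : a ≤ b),
      F.map (homOfLE h) ≫ φ b = φ a ≫ G.map (homOfLE (by linarith : a + ε ≤ b + ε))) ∧
    (∀ (a b : ℝ) (h : a ≤ b),
      G.map (homOfLE h) ≫ ψ b = ψ a ≫ F.map (homOfLE (by linarith : a + ε ≤ b + ε))) ∧
    (∀ a : ℝ, φ a ≫ ψ (a + ε) = F.map (homOfLE (by linarith : a ≤ a + ε + ε))) ∧
    (∀ a : ℝ, ψ a ≫ φ (a + ε) = G.map (homOfLE (by linarith : a ≤ a + ε + ε)))

/-- The interleaving distance, valued in `[0, ∞]`. -/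
noncomputable def interleavingDist {C : Type u} [Category.{v} C] (F G : ℝ ⥤ C) : ℝ≥0∞ :=
  sInf {e : ℝ≥0∞ | ∃ (ε : ℝ) (hε : 0 ≤ ε), e = ENNReal.ofReal ε ∧ Interleaved ε hε F G}

lemma Interleaved.mono {C : Type u} [Category.{v} C] {ε ε' : ℝ} (hε : 0 ≤ ε) (hε' : 0 ≤ ε')
    (hle : ε ≤ ε') {F G : ℝ ⥤ C} (h : Interleaved ε hε F G) : Interleaved ε' hε' F G := by
  obtain ⟨φ, ψ, h1, h2, h3, h4⟩ := h
  refine ⟨fun a => φ a ≫ G.map (homOfLE (by linarith : a + ε ≤ a + ε')),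
          fun a => ψ a ≫ F.map (homOfLE (by linarith : a + ε ≤ a + ε')), ?_, ?_, ?_, ?_⟩
  · intro a b h
    rw [← Category.assoc, h1 a b h, Category.assoc, ← G.map_comp, Category.assoc, ← G.map_comp]
    rfl
  · intro a b h
    rw [← Category.assoc, h2 a b h, Category.assoc, ← F.map_comp, Category.assoc, ← F.map_comp]
    rfl
  · intro a
    have nat := h2 (a + ε) (a + ε') (by linarith : a + ε ≤ a + ε')
    rw [Category.assoc, ← Category.assoc (G.map _), nat, Category.assoc, ← F.map_comp,
      ← Category.assoc, h3 a, ← F.map_comp]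
    rfl
  · intro a
    have nat := h1 (a + ε) (a + ε') (by linarith : a + ε ≤ a + ε')
    rw [Category.assoc, ← Category.assoc (F.map _), nat, Category.assoc, ← G.map_comp,
      ← Category.assoc, h4 a, ← G.map_comp]
    rfl

/-- Let `C : R ⥤ Π_γ Q_γ` be a `Γ`-coloring of a ranked category
(in particular the induced functor is fully faithful).  Two `(ℝ,≤)`-indexed diagrams
`F, G` in `R` are `ε`-interleaved iff `C_γ F` and `C_γ G` are `ε`-interleaved in
`Q_γ` for every `γ`; consequently
`d_R(F,G) = sup_γ d_{Q_γ}(C_γ F, C_γ G)`. -/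
theorem statement17 {R : Type u} [Category.{v} R]
    {Γ : Type w} (Q : Γ → Type u₂) [∀ γ, Category.{v₂} (Q γ)]
    (Cf : ∀ γ, R ⥤ Q γ)
    (hff : ∀ X Y : R, Function.Bijective
      (fun (f : X ⟶ Y) => (fun γ => (Cf γ).map f : ∀ γ, (Cf γ).obj X ⟶ (Cf γ).obj Y)))
    (F G : ℝ ⥤ R) :
    (∀ (ε : ℝ) (hε : 0 ≤ ε),
      Interleaved ε hε F G ↔ ∀ γ, Interleaved ε hε (F ⋙ Cf γ) (G ⋙ Cf γ)) ∧
    interleavingDist F G = ⨆ γ, interleavingDist (F ⋙ Cf γ) (G ⋙ Cf γ) := by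
  classical
  have key : ∀ (ε : ℝ) (hε : 0 ≤ ε),
      Interleaved ε hε F G ↔ ∀ γ, Interleaved ε hε (F ⋙ Cf γ) (G ⋙ Cf γ) := by
    intro ε hε
    constructor
    · rintro ⟨φ, ψ, h1, h2, h3, h4⟩ γ
      refine ⟨fun a => (Cf γ).map (φ a), fun a => (Cf γ).map (ψ a), ?_, ?_, ?_, ?_⟩
      · intro a b h
        show (Cf γ).map (F.map _) ≫ _ = _ ≫ (Cf γ).map (G.map _)
        rw [← Functor.map_comp, h1 a b h, Functor.map_comp]
      · intro a b h
        show (Cf γ).map (G.map _) ≫ _ = _ ≫ (Cf γ).map (F.map _)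
        rw [← Functor.map_comp, h2 a b h, Functor.map_comp]
      · intro a
        show (Cf γ).map _ ≫ (Cf γ).map _ = (Cf γ).map (F.map _)
        rw [← Functor.map_comp, h3 a]
      · intro a
        show (Cf γ).map _ ≫ (Cf γ).map _ = (Cf γ).map (G.map _)
        rw [← Functor.map_comp, h4 a]
    · intro hγ
      choose φ ψ h1 h2 h3 h4 using hγ
      let e : ∀ X Y : R, (X ⟶ Y) ≃ (∀ γ, (Cf γ).obj X ⟶ (Cf γ).obj Y) :=
        fun X Y => Equiv.ofBijective _ (hff X Y)
      have emap : ∀ (X Y : R) (v : ∀ γ, (Cf γ).obj X ⟶ (Cf γ).obj Y) (γ),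
          (Cf γ).map ((e X Y).symm v) = v γ := fun X Y v γ =>
        congrFun ((e X Y).apply_symm_apply v) γ
      have einj : ∀ (X Y : R) (f g : X ⟶ Y),
          (∀ γ, (Cf γ).map f = (Cf γ).map g) → f = g := fun X Y f g h =>
        (hff X Y).1 (funext h)
      refine ⟨fun a => (e _ _).symm (fun γ => φ γ a),
              fun a => (e _ _).symm (fun γ => ψ γ a), ?_, ?_, ?_, ?_⟩
      · intro a b h
        apply einj; intro γ
        rw [Functor.map_comp, Functor.map_comp, emap, emap]
        exact h1 γ a b h
      · intro a b h
        apply einj; intro γ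
        rw [Functor.map_comp, Functor.map_comp, emap, emap]
        exact h2 γ a b h
      · intro a
        apply einj; intro γ
        rw [Functor.map_comp, emap, emap]
        exact h3 γ a
      · intro a
        apply einj; intro γ
        rw [Functor.map_comp, emap, emap]
        exact h4 γ a
  refine ⟨key, le_antisymm ?_ ?_⟩
  · refine ENNReal.le_of_forall_pos_le_add ?_
    intro δ hδ htlt
    set t := ⨆ γ, interleavingDist (F ⋙ Cf γ) (G ⋙ Cf γ) with ht
    set εr : ℝ := t.toReal + δ with hεrdef
    have hδpos : (0 : ℝ) < δ := hδ
    have hεr : 0 ≤ εr := add_nonneg ENNReal.toReal_nonneg hδpos.le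
    have hεrpos : 0 < εr := lt_of_lt_of_le (by linarith [ENNReal.toReal_nonneg (a := t)]) le_rfl
    have hofreal : ENNReal.ofReal εr = t + δ := by
      rw [hεrdef, ENNReal.ofReal_add ENNReal.toReal_nonneg hδpos.le,
        ENNReal.ofReal_toReal htlt.ne, ENNReal.ofReal_coe_nnreal]
    have hPγ : ∀ γ, Interleaved εr hεr (F ⋙ Cf γ) (G ⋙ Cf γ) := by
      intro γ
      have hlt : interleavingDist (F ⋙ Cf γ) (G ⋙ Cf γ) < ENNReal.ofReal εr := by
        calc interleavingDist (F ⋙ Cf γ) (G ⋙ Cf γ) ≤ t := ht ▸ le_iSup (fun γ => interleavingDist (F ⋙ Cf γ) (G ⋙ Cf γ)) γ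
          _ < t + δ := ENNReal.lt_add_right htlt.ne (by exact_mod_cast hδ.ne')
          _ = ENNReal.ofReal εr := hofreal.symm
      obtain ⟨e', he', hlt'⟩ := sInf_lt_iff.1 hlt
      obtain ⟨εγ, hεγ, rfl, hI⟩ := he'
      have : εγ ≤ εr :=
        ((ENNReal.ofReal_lt_ofReal_iff hεrpos).1 hlt').le
      exact hI.mono hεγ hεr this
    have hle : interleavingDist F G ≤ ENNReal.ofReal εr :=
      sInf_le ⟨εr, hεr, rfl, (key εr hεr).2 hPγ⟩
    calc interleavingDist F G ≤ ENNReal.ofReal εr := hle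
      _ = t + δ := hofreal
  · refine iSup_le fun γ => le_sInf ?_
    rintro e' ⟨ε, hε, rfl, hI⟩
    exact sInf_le ⟨ε, hε, rfl, (key ε hε).1 hI γ⟩
end
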